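/- arXiv:1410.1372 — 5 statements merged into one kernel-verified Lean document; each statement's English description precedes it below -/
import Mathlib

section
/- Johnson's theorem: Let C1, C2, C3 be three circles in the Euclidean plane, all of the same radius r > 0 and with pairwise distinct centers, that pass through a common point Q. Let A be a second intersection point of C1 and C2, B a second intersection point of C2 and C3, and C a second intersection point of C3 and C1, with A, B, C all distinct from Q and not collinear. Then the circumradius of triangle ABC equals r; equivalently, there exists a point O in the plane with dist(O,A) = dist(O,B) = dist(O,C) = r. -/
open InnerProductSpace

local notation "E" => EuclideanSpace ℝ (Fin 2)

/-- In dimension 2, a vector orthogonal to two nonzero orthogonal vectors is zero. -/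
lemma ortho2 (u v w : E) (hu : u ≠ 0) (hv : v ≠ 0)
    (huv : ⟪u, v⟫_ℝ = 0) (hw1 : ⟪u, w⟫_ℝ = 0) (hw2 : ⟪v, w⟫_ℝ = 0) : w = 0 := by
  have hinner : ∀ x y : E, ⟪x, y⟫_ℝ = x 0 * y 0 + x 1 * y 1 := by
    intro x y
    simp [PiLp.inner_apply, Fin.sum_univ_two, mul_comm]
  rw [hinner] at huv hw1 hw2
  have hu' : u 0 ≠ 0 ∨ u 1 ≠ 0 := by
    by_contra h
    push_neg at h
    exact hu (by ext i; fin_cases i <;> simp [h.1, h.2])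
  have hv' : v 0 ≠ 0 ∨ v 1 ≠ 0 := by
    by_contra h
    push_neg at h
    exact hv (by ext i; fin_cases i <;> simp [h.1, h.2])
  have hd : u 0 * v 1 - u 1 * v 0 ≠ 0 := by
    intro h
    have lag : (u 0 * u 0 + u 1 * u 1) * (v 0 * v 0 + v 1 * v 1) = 0 := by
      linear_combination (u 0 * v 0 + u 1 * v 1) * huv + (u 0 * v 1 - u 1 * v 0) * h
    rcases hu' with h0 | h0 <;> rcases hv' with k0 | k0 <;>
      nlinarith [mul_self_pos.2 h0, mul_self_pos.2 k0, mul_self_nonneg (u 0),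
        mul_self_nonneg (u 1), mul_self_nonneg (v 0), mul_self_nonneg (v 1)]
  have h0 : w 0 = 0 := by
    have : (u 0 * v 1 - u 1 * v 0) * w 0 = 0 := by
      linear_combination v 1 * hw1 - u 1 * hw2
    exact (mul_eq_zero.1 this).resolve_left hd
  have h1 : w 1 = 0 := by
    have : (u 0 * v 1 - u 1 * v 0) * w 1 = 0 := by
      linear_combination u 0 * hw2 - v 0 * hw1
    exact (mul_eq_zero.1 this).resolve_left hd
  ext i; fin_cases i <;> simp [h0, h1]

/-- Two circles of equal radius with distinct centers: a second common point is
the reflection of the first through the midpoint of the centers. -/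
lemma second_point (P Q c₁ c₂ : E) (hPQ : P ≠ Q) (hc : c₁ ≠ c₂)
    (h1 : dist P c₁ = dist Q c₁) (h2 : dist P c₂ = dist Q c₂)
    (h3 : dist Q c₁ = dist Q c₂) : P = c₁ + c₂ - Q := by
  have sq : ∀ x y : E, dist x y ^ 2 = ⟪x - y, x - y⟫_ℝ := by
    intro x y
    rw [dist_eq_norm, ← real_inner_self_eq_norm_sq]
  have e1 : ⟪P - c₁, P - c₁⟫_ℝ = ⟪Q - c₁, Q - c₁⟫_ℝ := by
    rw [← sq, ← sq, h1]
  have e2 : ⟪P - c₂, P - c₂⟫_ℝ = ⟪Q - c₂, Q - c₂⟫_ℝ := by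
    rw [← sq, ← sq, h2]
  have e3 : ⟪Q - c₁, Q - c₁⟫_ℝ = ⟪Q - c₂, Q - c₂⟫_ℝ := by
    rw [← sq, ← sq, h3]
  have hu : P - Q ≠ 0 := sub_ne_zero.2 hPQ
  have hv : c₂ - c₁ ≠ 0 := sub_ne_zero.2 hc.symm
  have key : P + Q - c₁ - c₂ = 0 := by
    apply ortho2 (P - Q) (c₂ - c₁) _ hu hv
    · simp only [inner_sub_left, inner_sub_right] at e1 e2 ⊢
      have := real_inner_comm P c₁
      have := real_inner_comm P c₂
      have := real_inner_comm Q c₁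
      have := real_inner_comm Q c₂
      have := real_inner_comm P Q
      have := real_inner_comm c₁ c₂
      linarith
    · simp only [inner_sub_left, inner_sub_right, inner_add_left, inner_add_right] at e1 e2 ⊢
      have := real_inner_comm P c₁
      have := real_inner_comm P c₂
      have := real_inner_comm Q c₁
      have := real_inner_comm Q c₂
      have := real_inner_comm P Q
      have := real_inner_comm c₁ c₂
      linarith
    · -- ⟪c₂ - c₁, P + Q - c₁ - c₂⟫ = 0
      have e4 : ⟪P - c₁, P - c₁⟫_ℝ = ⟪P - c₂, P - c₂⟫_ℝ := by
        rw [e1, e2, e3]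
      simp only [inner_sub_left, inner_sub_right, inner_add_left, inner_add_right] at e3 e4 ⊢
      have := real_inner_comm P c₁
      have := real_inner_comm P c₂
      have := real_inner_comm Q c₁
      have := real_inner_comm Q c₂
      have := real_inner_comm c₁ c₂
      linarith
  have h : P + Q = c₁ + c₂ :=
    sub_eq_zero.1 (show P + Q - (c₁ + c₂) = 0 by rw [← key]; abel)
  exact eq_sub_iff_add_eq.2 h

/-- Johnson's theorem: three circles of equal radius `r > 0` with pairwise
distinct centers passing through a common point `Q`, with second intersection
points `A`, `B`, `C` (pairwise intersections) distinct from `Q` and not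
collinear, have the circumradius of triangle `ABC` equal to `r`: there is a
point `O` with `dist O A = dist O B = dist O C = r`. -/
theorem johnson_theorem
    (r : ℝ) (hr : 0 < r)
    (c₁ c₂ c₃ Q A B C : EuclideanSpace ℝ (Fin 2))
    (hc₁₂ : c₁ ≠ c₂) (hc₂₃ : c₂ ≠ c₃) (hc₁₃ : c₁ ≠ c₃)
    (hQ₁ : dist Q c₁ = r) (hQ₂ : dist Q c₂ = r) (hQ₃ : dist Q c₃ = r)
    (hA₁ : dist A c₁ = r) (hA₂ : dist A c₂ = r) (hAQ : A ≠ Q)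
    (hB₂ : dist B c₂ = r) (hB₃ : dist B c₃ = r) (hBQ : B ≠ Q)
    (hC₃ : dist C c₃ = r) (hC₁ : dist C c₁ = r) (hCQ : C ≠ Q)
    (hncol : ¬ Collinear ℝ ({A, B, C} : Set (EuclideanSpace ℝ (Fin 2)))) :
    ∃ O : EuclideanSpace ℝ (Fin 2),
      dist O A = r ∧ dist O B = r ∧ dist O C = r := by
  have hA : A = c₁ + c₂ - Q :=
    second_point A Q c₁ c₂ hAQ hc₁₂ (hA₁.trans hQ₁.symm) (hA₂.trans hQ₂.symm)
      (hQ₁.trans hQ₂.symm)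
  have hB : B = c₂ + c₃ - Q :=
    second_point B Q c₂ c₃ hBQ hc₂₃ (hB₂.trans hQ₂.symm) (hB₃.trans hQ₃.symm)
      (hQ₂.trans hQ₃.symm)
  have hC : C = c₃ + c₁ - Q :=
    second_point C Q c₃ c₁ hCQ hc₁₃.symm (hC₃.trans hQ₃.symm) (hC₁.trans hQ₁.symm)
      (hQ₃.trans hQ₁.symm)
  refine ⟨c₁ + c₂ + c₃ - Q - Q, ?_, ?_, ?_⟩
  · have h : dist (c₁ + c₂ + c₃ - Q - Q) A = dist c₃ Q := by
      rw [hA, dist_eq_norm, dist_eq_norm]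
      congr 1; abel
    rw [h, dist_comm, hQ₃]
  · have h : dist (c₁ + c₂ + c₃ - Q - Q) B = dist c₁ Q := by
      rw [hB, dist_eq_norm, dist_eq_norm]
      congr 1; abel
    rw [h, dist_comm, hQ₁]
  · have h : dist (c₁ + c₂ + c₃ - Q - Q) C = dist c₂ Q := by
      rw [hC, dist_eq_norm, dist_eq_norm]
      congr 1; abel
    rw [h, dist_comm, hQ₂]
end

section
/- Any triangle inscribed in a circle of radius r > 0 has area at most (3√3/4)·r². That is, if A, B, C are points of the Euclidean plane all at distance r from a common point O, then the area of triangle ABC is at most (3√3/4)·r². -/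
private lemma key_quad (p m u v : ℝ) (h : p^2+m^2+u^2+v^2 = 4) :
    p*(2-u) + m*v ≤ 3 * Real.sqrt 3 := by
  have hq : Real.sqrt 3 ^ 2 = 3 := Real.sq_sqrt (by norm_num)
  have hq0 : (0:ℝ) < Real.sqrt 3 := Real.sqrt_pos.2 (by norm_num)
  set w := Real.sqrt (u^2+v^2) with hw
  have hw0 : 0 ≤ w := Real.sqrt_nonneg _
  have hw2 : w^2 = u^2+v^2 := Real.sq_sqrt (by positivity)
  have hwu : -u ≤ w := by nlinarith [sq_nonneg v, sq_nonneg (w+u), sq_nonneg (w-u)]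
  rcases le_or_gt (p*(2-u)+m*v) 0 with hL | hL
  · nlinarith
  · have hcs : (p*(2-u)+m*v)^2 ≤ (p^2+m^2)*((2-u)^2+v^2) := by
      nlinarith [sq_nonneg (p*v - m*(2-u))]
    have h2 : (2-u)^2+v^2 ≤ (2+w)^2 := by nlinarith
    have h3 : (p^2+m^2)*((2+w)^2) ≤ 27 := by
      nlinarith [sq_nonneg (w-1), sq_nonneg (w+1), mul_nonneg hw0 (sq_nonneg (w-1))]
    have h4 : (p*(2-u)+m*v)^2 ≤ 27 := by nlinarith [sq_nonneg p, sq_nonneg m]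
    nlinarith [h4, sq_nonneg (p*(2-u)+m*v - 3*Real.sqrt 3)]

private lemma key_trig (s c s' c' : ℝ) (h1 : s^2+c^2=1) (h2 : s'^2+c'^2=1) :
    s + s' - (s*c' + c*s') ≤ 3 * Real.sqrt 3 / 2 := by
  have := key_quad (s+s') (s-s') (c+c') (c-c') (by nlinarith)
  nlinarith

private lemma key_unit (a0 a1 b0 b1 c0 c1 : ℝ)
    (ha : a0^2+a1^2=1) (hb : b0^2+b1^2=1) (hc : c0^2+c1^2=1) :
    (a0*b1-a1*b0) + (b0*c1-b1*c0) + (c0*a1-c1*a0) ≤ 3 * Real.sqrt 3 / 2 := by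
  have h1 : (a0*b1-a1*b0)^2 + (a0*b0+a1*b1)^2 = 1 := by
    linear_combination (b0^2+b1^2) * ha + hb
  have h2 : (b0*c1-b1*c0)^2 + (b0*c0+b1*c1)^2 = 1 := by
    linear_combination (c0^2+c1^2) * hb + hc
  have hid : c0*a1-c1*a0 =
      -((a0*b1-a1*b0)*(b0*c0+b1*c1) + (a0*b0+a1*b1)*(b0*c1-b1*c0)) := by
    linear_combination (c1*a0 - c0*a1) * hb
  have := key_trig (a0*b1-a1*b0) (a0*b0+a1*b1) (b0*c1-b1*c0) (b0*c0+b1*c1) h1 h2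
  rw [hid]; linarith

/-- Any triangle inscribed in a circle of radius `r > 0` has area at most
`(3√3/4)·r²`, where the area is half the absolute value of the determinant of
`B - A` and `C - A`. -/
theorem area_inscribed_triangle_le
    (r : ℝ) (hr : 0 < r)
    (O A B C : EuclideanSpace ℝ (Fin 2))
    (hA : dist O A = r) (hB : dist O B = r) (hC : dist O C = r) :
    |(B 0 - A 0) * (C 1 - A 1) - (B 1 - A 1) * (C 0 - A 0)| / 2
      ≤ (3 * Real.sqrt 3 / 4) * r ^ 2 := by
  have hrne : r ≠ 0 := ne_of_gt hr
  have hsq : ∀ X : EuclideanSpace ℝ (Fin 2), dist O X = r →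
      ((X 0 - O 0)/r)^2 + ((X 1 - O 1)/r)^2 = 1 := by
    intro X hX
    have h1 : dist O X ^ 2 = r ^ 2 := by rw [hX]
    rw [EuclideanSpace.dist_eq] at h1
    rw [Real.sq_sqrt (by positivity)] at h1
    simp [Fin.sum_univ_two, Real.dist_eq, sq_abs] at h1
    field_simp
    nlinarith [h1]
  have ha := hsq A hA
  have hb := hsq B hB
  have hc := hsq C hC
  have hup := key_unit _ _ _ _ _ _ ha hb hc
  have hdown := key_unit _ _ _ _ _ _ hb ha hc
  set S := (((A 0 - O 0)/r)*((B 1 - O 1)/r)-((A 1 - O 1)/r)*((B 0 - O 0)/r))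
    + (((B 0 - O 0)/r)*((C 1 - O 1)/r)-((B 1 - O 1)/r)*((C 0 - O 0)/r))
    + (((C 0 - O 0)/r)*((A 1 - O 1)/r)-((C 1 - O 1)/r)*((A 0 - O 0)/r)) with hS
  have habs : |S| ≤ 3 * Real.sqrt 3 / 2 := abs_le.2 ⟨by rw [hS]; linarith, by rw [hS]; linarith⟩
  have hD : (B 0 - A 0) * (C 1 - A 1) - (B 1 - A 1) * (C 0 - A 0) = r^2 * S := by
    rw [hS]; field_simp; ring
  rw [hD, abs_mul, abs_of_pos (by positivity : (0:ℝ) < r^2)]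
  nlinarith [habs, sq_nonneg r]
end

section
/- Let C1, C2, C3 be three circles in the Euclidean plane, all of the same radius r > 0 and with pairwise distinct centers, that pass through a common point Q. Let A be a second intersection point of C1 and C2, B a second intersection point of C2 and C3, and C a second intersection point of C3 and C1, with A, B, C all distinct from Q and not collinear. Then the area of triangle ABC is at most (3√3/4)·r²; consequently the ratio of the area of a disk of radius r to the area of triangle ABC is at least 4π/√27. -/
set_option maxHeartbeats 1000000


lemma second_pt (r q0 q1 a0 a1 x0 x1 y0 y1 : ℝ)
    (hx : (q0-x0)^2+(q1-x1)^2 = r^2) (hy : (q0-y0)^2+(q1-y1)^2 = r^2)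
    (hax : (a0-x0)^2+(a1-x1)^2 = r^2) (hay : (a0-y0)^2+(a1-y1)^2 = r^2)
    (hne : ¬(x0 = y0 ∧ x1 = y1)) (haq : ¬(a0 = q0 ∧ a1 = q1)) :
    a0 = x0 + y0 - q0 ∧ a1 = x1 + y1 - q1 := by
  have key1 : (a0-q0)*(y0-x0) + (a1-q1)*(y1-x1) = 0 := by
    linear_combination (hax - hay - hx + hy)/2
  have key3 : (x0+y0-2*q0)*(y0-x0) + (x1+y1-2*q1)*(y1-x1) = 0 := by
    linear_combination hy - hx
  have key2 : (a0-q0)*(x0+y0-2*q0) + (a1-q1)*(x1+y1-2*q1) = (a0-q0)^2 + (a1-q1)^2 := by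
    linear_combination (hx + hy - hax - hay)/2
  have key4 : (a0-q0)*(x1+y1-2*q1) - (a1-q1)*(x0+y0-2*q0) = 0 := by
    rcases not_and_or.mp hne with h | h
    · have hu : y0 - x0 ≠ 0 := fun h' => h (by linarith)
      have h0 : (y0-x0) * ((a0-q0)*(x1+y1-2*q1) - (a1-q1)*(x0+y0-2*q0)) = 0 := by
        linear_combination (x1+y1-2*q1)*key1 - (a1-q1)*key3
      exact (mul_eq_zero.mp h0).resolve_left hu
    · have hu : y1 - x1 ≠ 0 := fun h' => h (by linarith)
      have h0 : (y1-x1) * ((a0-q0)*(x1+y1-2*q1) - (a1-q1)*(x0+y0-2*q0)) = 0 := by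
        linear_combination (-(x0+y0-2*q0))*key1 + (a0-q0)*key3
      exact (mul_eq_zero.mp h0).resolve_left hu
  have key5 : 0 < (a0-q0)^2 + (a1-q1)^2 := by
    rcases not_and_or.mp haq with h | h
    · have h' : a0 - q0 ≠ 0 := fun h' => h (by linarith)
      nlinarith [mul_self_pos.mpr h', sq_nonneg (a1-q1)]
    · have h' : a1 - q1 ≠ 0 := fun h' => h (by linarith)
      nlinarith [mul_self_pos.mpr h', sq_nonneg (a0-q0)]
  have hl : ((a0-q0)^2+(a1-q1)^2) * ((x0+y0-2*q0)^2+(x1+y1-2*q1)^2)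
      = ((a0-q0)^2+(a1-q1)^2) * ((a0-q0)^2+(a1-q1)^2) := by
    linear_combination ((a0-q0)*(x0+y0-2*q0) + (a1-q1)*(x1+y1-2*q1) + (a0-q0)^2 + (a1-q1)^2) * key2
      + ((a0-q0)*(x1+y1-2*q1) - (a1-q1)*(x0+y0-2*q0)) * key4
  have hss : (x0+y0-2*q0)^2+(x1+y1-2*q1)^2 = (a0-q0)^2+(a1-q1)^2 :=
    mul_left_cancel₀ (ne_of_gt key5) hl
  have hz : (a0-q0-(x0+y0-2*q0))^2 + (a1-q1-(x1+y1-2*q1))^2 = 0 := by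
    linear_combination hss - 2*key2
  have e0 : (a0-q0-(x0+y0-2*q0))^2 = 0 := by
    linarith [hz, sq_nonneg (a0-q0-(x0+y0-2*q0)), sq_nonneg (a1-q1-(x1+y1-2*q1))]
  have e1 : (a1-q1-(x1+y1-2*q1))^2 = 0 := by
    linarith [hz, sq_nonneg (a0-q0-(x0+y0-2*q0)), sq_nonneg (a1-q1-(x1+y1-2*q1))]
  have f0 : a0-q0-(x0+y0-2*q0) = 0 := by
    exact pow_eq_zero_iff (two_ne_zero) |>.mp e0
  have f1 : a1-q1-(x1+y1-2*q1) = 0 := by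
    exact pow_eq_zero_iff (two_ne_zero) |>.mp e1
  constructor <;> linarith

lemma tri_bound (r a b c d e f : ℝ) (h1 : a^2+b^2 = r^2) (h2 : c^2+d^2 = r^2)
    (h3 : e^2+f^2 = r^2) :
    |a*d - b*c + c*f - d*e + e*b - f*a| ≤ 3 * Real.sqrt 3 / 2 * r^2 := by
  set s := Real.sqrt 3 with hsdef
  have hs : s^2 = 3 := Real.sq_sqrt (by norm_num)
  have hs0 : 0 < s := Real.sqrt_pos.mpr (by norm_num)
  have hup : 4*s*(3*s/2*r^2 - (a*d - b*c + c*f - d*e + e*b - f*a))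
      = (s*a - d + f)^2 + (s*b + c - e)^2 + (s*c - f + b)^2 + (s*d + e - a)^2
        + (s*e - b + d)^2 + (s*f + a - c)^2 + (a+c+e)^2 + (b+d+f)^2 := by
    linear_combination (-(s^2+3))*h1 + (-(s^2+3))*h2 + (-(s^2+3))*h3 + 3*r^2*hs
  have hlo : 4*s*(3*s/2*r^2 + (a*d - b*c + c*f - d*e + e*b - f*a))
      = (s*a + d - f)^2 + (s*b - c + e)^2 + (s*c + f - b)^2 + (s*d - e + a)^2
        + (s*e + b - d)^2 + (s*f - a + c)^2 + (a+c+e)^2 + (b+d+f)^2 := by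
    linear_combination (-(s^2+3))*h1 + (-(s^2+3))*h2 + (-(s^2+3))*h3 + 3*r^2*hs
  have hupn : 0 ≤ 4*s*(3*s/2*r^2 - (a*d - b*c + c*f - d*e + e*b - f*a)) := by
    rw [hup]; positivity
  have hlon : 0 ≤ 4*s*(3*s/2*r^2 + (a*d - b*c + c*f - d*e + e*b - f*a)) := by
    rw [hlo]; positivity
  rw [abs_le]
  constructor
  · nlinarith [hlon, hs0]
  · nlinarith [hupn, hs0]


lemma dist_coord (r : ℝ) (X Y : EuclideanSpace ℝ (Fin 2)) (h : dist X Y = r) :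
    (X 0 - Y 0)^2 + (X 1 - Y 1)^2 = r^2 := by
  rw [EuclideanSpace.dist_eq, Fin.sum_univ_two] at h
  have h0 : (0:ℝ) ≤ (X 0 - Y 0)^2 + (X 1 - Y 1)^2 := by positivity
  rw [Real.dist_eq, Real.dist_eq, sq_abs, sq_abs] at h
  rw [← h, Real.sq_sqrt h0]

lemma ne_coord (X Y : EuclideanSpace ℝ (Fin 2)) (h : X ≠ Y) :
    ¬(X 0 = Y 0 ∧ X 1 = Y 1) := by
  rintro ⟨h0, h1⟩
  apply h
  ext i
  fin_cases i <;> assumption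

lemma collinear_of_det (A B C : EuclideanSpace ℝ (Fin 2))
    (h : (B 0 - A 0) * (C 1 - A 1) - (B 1 - A 1) * (C 0 - A 0) = 0) :
    Collinear ℝ ({A, B, C} : Set (EuclideanSpace ℝ (Fin 2))) := by
  by_cases hBA : B = A
  · subst hBA
    rw [show ({B, B, C} : Set (EuclideanSpace ℝ (Fin 2))) = {B, C} by simp]
    exact collinear_pair ℝ B C
  · have hne := ne_coord B A hBA
    have hden : (B 0 - A 0)^2 + (B 1 - A 1)^2 ≠ 0 := by
      rcases not_and_or.mp hne with h' | h'
      · have : B 0 - A 0 ≠ 0 := fun hh => h' (by linarith)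
        positivity
      · have : B 1 - A 1 ≠ 0 := fun hh => h' (by linarith)
        positivity
    rw [collinear_iff_of_mem (Set.mem_insert A {B, C})]
    refine ⟨B - A, ?_⟩
    intro p hp
    rcases hp with rfl | rfl | rfl
    · exact ⟨0, by simp⟩
    · exact ⟨1, by simp⟩
    · refine ⟨((p 0 - A 0)*(B 0 - A 0) + (p 1 - A 1)*(B 1 - A 1)) /
        ((B 0 - A 0)^2 + (B 1 - A 1)^2), ?_⟩
      set t : ℝ := ((p 0 - A 0)*(B 0 - A 0) + (p 1 - A 1)*(B 1 - A 1)) /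
        ((B 0 - A 0)^2 + (B 1 - A 1)^2) with ht
      have e0 : (t • (B - A) +ᵥ A) 0 = t * (B 0 - A 0) + A 0 := rfl
      have e1 : (t • (B - A) +ᵥ A) 1 = t * (B 1 - A 1) + A 1 := rfl
      ext i
      fin_cases i
      · show p 0 = (t • (B - A) +ᵥ A) 0
        rw [e0, ht]
        field_simp
        linear_combination (A 1 - B 1) * h
      · show p 1 = (t • (B - A) +ᵥ A) 1
        rw [e1, ht]
        field_simp
        linear_combination (B 0 - A 0) * h

/-- Under the Johnson configuration (three equal circles of radius `r > 0`
through a common point `Q`, with second intersection points `A`, `B`, `C` not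
collinear), the area of triangle `ABC` is at most `(3√3/4)·r²`, and hence the
ratio of the area of a disk of radius `r` to the area of triangle `ABC` is at
least `4π/√27`. -/
theorem johnson_triangle_density
    (r : ℝ) (hr : 0 < r)
    (c₁ c₂ c₃ Q A B C : EuclideanSpace ℝ (Fin 2))
    (hc₁₂ : c₁ ≠ c₂) (hc₂₃ : c₂ ≠ c₃) (hc₁₃ : c₁ ≠ c₃)
    (hQ₁ : dist Q c₁ = r) (hQ₂ : dist Q c₂ = r) (hQ₃ : dist Q c₃ = r)
    (hA₁ : dist A c₁ = r) (hA₂ : dist A c₂ = r) (hAQ : A ≠ Q)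
    (hB₂ : dist B c₂ = r) (hB₃ : dist B c₃ = r) (hBQ : B ≠ Q)
    (hC₃ : dist C c₃ = r) (hC₁ : dist C c₁ = r) (hCQ : C ≠ Q)
    (hncol : ¬ Collinear ℝ ({A, B, C} : Set (EuclideanSpace ℝ (Fin 2)))) :
    |(B 0 - A 0) * (C 1 - A 1) - (B 1 - A 1) * (C 0 - A 0)| / 2
        ≤ (3 * Real.sqrt 3 / 4) * r ^ 2 ∧
    (Real.pi * r ^ 2) /
        (|(B 0 - A 0) * (C 1 - A 1) - (B 1 - A 1) * (C 0 - A 0)| / 2)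
      ≥ 4 * Real.pi / Real.sqrt 27 := by
  -- coordinate versions of the circle equations
  have hQ1 := dist_coord r Q c₁ hQ₁
  have hQ2 := dist_coord r Q c₂ hQ₂
  have hQ3 := dist_coord r Q c₃ hQ₃
  have hA1 := dist_coord r A c₁ hA₁
  have hA2 := dist_coord r A c₂ hA₂
  have hB2 := dist_coord r B c₂ hB₂
  have hB3 := dist_coord r B c₃ hB₃
  have hC3 := dist_coord r C c₃ hC₃
  have hC1 := dist_coord r C c₁ hC₁
  obtain ⟨hA0, hA1'⟩ := second_pt r (Q 0) (Q 1) (A 0) (A 1) (c₁ 0) (c₁ 1) (c₂ 0) (c₂ 1)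
    hQ1 hQ2 hA1 hA2 (ne_coord c₁ c₂ hc₁₂) (ne_coord A Q hAQ)
  obtain ⟨hB0, hB1'⟩ := second_pt r (Q 0) (Q 1) (B 0) (B 1) (c₂ 0) (c₂ 1) (c₃ 0) (c₃ 1)
    hQ2 hQ3 hB2 hB3 (ne_coord c₂ c₃ hc₂₃) (ne_coord B Q hBQ)
  obtain ⟨hC0, hC1'⟩ := second_pt r (Q 0) (Q 1) (C 0) (C 1) (c₃ 0) (c₃ 1) (c₁ 0) (c₁ 1)
    hQ3 hQ1 hC3 hC1 (ne_coord c₃ c₁ hc₁₃.symm) (ne_coord C Q hCQ)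
  -- express the determinant in terms of the centers
  set D := (B 0 - A 0) * (C 1 - A 1) - (B 1 - A 1) * (C 0 - A 0) with hD
  have hs3 : (0:ℝ) < Real.sqrt 3 := Real.sqrt_pos.mpr (by norm_num)
  have habs : |D| ≤ 3 * Real.sqrt 3 / 2 * r^2 := by
    have h1 : (c₁ 0 - Q 0)^2 + (c₁ 1 - Q 1)^2 = r^2 := by linear_combination hQ1
    have h2 : (c₂ 0 - Q 0)^2 + (c₂ 1 - Q 1)^2 = r^2 := by linear_combination hQ2
    have h3 : (c₃ 0 - Q 0)^2 + (c₃ 1 - Q 1)^2 = r^2 := by linear_combination hQ3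
    have ht := tri_bound r (c₁ 0 - Q 0) (c₁ 1 - Q 1) (c₂ 0 - Q 0) (c₂ 1 - Q 1)
      (c₃ 0 - Q 0) (c₃ 1 - Q 1) h1 h2 h3
    have hrw : D = (c₁ 0 - Q 0)*(c₂ 1 - Q 1) - (c₁ 1 - Q 1)*(c₂ 0 - Q 0)
        + (c₂ 0 - Q 0)*(c₃ 1 - Q 1) - (c₂ 1 - Q 1)*(c₃ 0 - Q 0)
        + (c₃ 0 - Q 0)*(c₁ 1 - Q 1) - (c₃ 1 - Q 1)*(c₁ 0 - Q 0) := by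
      rw [hD, hA0, hA1', hB0, hB1', hC0, hC1']; ring
    calc |D| = |(c₁ 0 - Q 0)*(c₂ 1 - Q 1) - (c₁ 1 - Q 1)*(c₂ 0 - Q 0)
        + ((c₂ 0 - Q 0)*(c₃ 1 - Q 1) - (c₂ 1 - Q 1)*(c₃ 0 - Q 0))
        + ((c₃ 0 - Q 0)*(c₁ 1 - Q 1) - (c₃ 1 - Q 1)*(c₁ 0 - Q 0))| := by rw [hrw]; ring_nf
      _ ≤ 3 * Real.sqrt 3 / 2 * r^2 := by
          have : (c₁ 0 - Q 0)*(c₂ 1 - Q 1) - (c₁ 1 - Q 1)*(c₂ 0 - Q 0)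
              + ((c₂ 0 - Q 0)*(c₃ 1 - Q 1) - (c₂ 1 - Q 1)*(c₃ 0 - Q 0))
              + ((c₃ 0 - Q 0)*(c₁ 1 - Q 1) - (c₃ 1 - Q 1)*(c₁ 0 - Q 0))
              = (c₁ 0 - Q 0)*(c₂ 1 - Q 1) - (c₁ 1 - Q 1)*(c₂ 0 - Q 0)
              + (c₂ 0 - Q 0)*(c₃ 1 - Q 1) - (c₂ 1 - Q 1)*(c₃ 0 - Q 0)
              + (c₃ 0 - Q 0)*(c₁ 1 - Q 1) - (c₃ 1 - Q 1)*(c₁ 0 - Q 0) := by ring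
          rw [this]
          exact ht
  have hDne : D ≠ 0 := fun h0 => hncol (collinear_of_det A B C h0)
  have hDpos : 0 < |D| := abs_pos.mpr hDne
  have hfirst : |D| / 2 ≤ 3 * Real.sqrt 3 / 4 * r^2 := by linarith
  refine ⟨hfirst, ?_⟩
  have h27 : Real.sqrt 27 = 3 * Real.sqrt 3 := by
    rw [show (27:ℝ) = 3^2 * 3 by norm_num, Real.sqrt_mul (by positivity),
      Real.sqrt_sq (by norm_num : (0:ℝ) ≤ 3)]
  have hbound : (0:ℝ) < 3 * Real.sqrt 3 / 4 * r^2 := by positivity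
  have hkey : Real.pi * r^2 / (3 * Real.sqrt 3 / 4 * r^2) ≤ Real.pi * r^2 / (|D| / 2) :=
    div_le_div_of_nonneg_left (by positivity) (by positivity) hfirst
  have heval : Real.pi * r^2 / (3 * Real.sqrt 3 / 4 * r^2) = 4 * Real.pi / Real.sqrt 27 := by
    rw [h27]
    field_simp
  rw [ge_iff_le, ← heval]
  exact hkey
end

section
/- Let r > 0 and let a, b, c be points of the Euclidean plane with a ≠ c and b ≠ c. Then the circle of radius r centered at c (the set of points at distance exactly r from c) is not contained in the union of the closed disk of radius r centered at a and the closed disk of radius r centered at b. -/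
/-!
In dimension at least two there is a unit vector `u` orthogonal to `a - c` with
`⟪u, b - c⟫ ≤ 0` (flip the sign of a normal to `a - c` if needed). The point `x = c + r • u`
lies on the circle, and the angles `∠ x c a` and `∠ x c b` are at least right angles, so `x`
is farther than `r` from `a` and from `b`.
-/
open Module RealInnerProductSpace

section InnerProductSpace

variable {E : Type*} [NormedAddCommGroup E] [InnerProductSpace ℝ E]

theorem exists_ne_zero_inner_eq_zero (hE : 1 < finrank ℝ E) (v : E) :
    ∃ w : E, w ≠ 0 ∧ ⟪w, v⟫ = 0 := by
  have : FiniteDimensional ℝ E := Module.finite_of_finrank_pos (by omega)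
  have hspan : (ℝ ∙ v) ≠ ⊤ := fun h => by
    have := finrank_span_le_card (R := ℝ) ({v} : Set E)
    rw [h, finrank_top] at this
    rw [Set.toFinset_singleton, Finset.card_singleton] at this
    omega
  obtain ⟨w, hw, hw0⟩ := Submodule.exists_mem_ne_zero_of_ne_bot
    (mt (Submodule.orthogonal_eq_bot_iff).mp hspan)
  exact ⟨w, hw0, Submodule.mem_orthogonal_singleton_iff_inner_left.mp hw⟩

theorem exists_norm_eq_one_inner_eq_zero_inner_nonpos (hE : 1 < finrank ℝ E) (p q : E) :
    ∃ u : E, ‖u‖ = 1 ∧ ⟪u, p⟫ = 0 ∧ ⟪u, q⟫ ≤ 0 := by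
  obtain ⟨w, hw0, hwp⟩ := exists_ne_zero_inner_eq_zero hE p
  have hunit : ‖‖w‖⁻¹ • w‖ = 1 := norm_smul_inv_norm hw0
  rcases le_total ⟪w, q⟫ 0 with hwq | hwq
  · exact ⟨‖w‖⁻¹ • w, hunit, by simp [real_inner_smul_left, hwp],
      by rw [real_inner_smul_left]; exact mul_nonpos_of_nonneg_of_nonpos (by positivity) hwq⟩
  · refine ⟨-(‖w‖⁻¹ • w), by rwa [norm_neg], by simp [real_inner_smul_left, hwp], ?_⟩
    rw [inner_neg_left, real_inner_smul_left, neg_nonpos]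
    positivity

theorem dist_lt_dist_of_inner_sub_nonpos {x c p : E} (hp : p ≠ c) (h : ⟪x - c, p - c⟫ ≤ 0) :
    dist x c < dist x p := by
  have hpc : 0 < ‖p - c‖ := norm_pos_iff.mpr (sub_ne_zero.mpr hp)
  have hsq : ‖x - p‖ ^ 2 = ‖x - c‖ ^ 2 - 2 * ⟪x - c, p - c⟫ + ‖p - c‖ ^ 2 := by
    rw [← norm_sub_sq_real, sub_sub_sub_cancel_right]
  rw [dist_eq_norm, dist_eq_norm]
  exact lt_of_pow_lt_pow_left₀ 2 (norm_nonneg _) (by nlinarith)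

end InnerProductSpace

/-- The circle of radius `r > 0` centered at `c` is not contained in the union
of two closed disks of the same radius `r` whose centers `a` and `b` both
differ from `c`. -/
theorem sphere_not_subset_union_closedBall
    (r : ℝ) (hr : 0 < r)
    (a b c : EuclideanSpace ℝ (Fin 2)) (hac : a ≠ c) (hbc : b ≠ c) :
    ¬ (Metric.sphere c r ⊆ Metric.closedBall a r ∪ Metric.closedBall b r) := by
  intro hsub
  obtain ⟨u, hu, hua, hub⟩ :=
    exists_norm_eq_one_inner_eq_zero_inner_nonpos (by simp) (a - c) (b - c)
  have hx : c + r • u ∈ Metric.sphere c r := by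
    simp [norm_smul, hu, hr.le]
  have not_mem : ∀ p, p ≠ c → ⟪u, p - c⟫ ≤ 0 → c + r • u ∉ Metric.closedBall p r := by
    intro p hp hup
    rw [Metric.mem_closedBall, not_le]
    calc r = dist (c + r • u) c := (Metric.mem_sphere.mp hx).symm
      _ < dist (c + r • u) p := dist_lt_dist_of_inner_sub_nonpos hp <| by
        rw [add_sub_cancel_left, real_inner_smul_left]
        exact mul_nonpos_of_nonneg_of_nonpos hr.le hup
  rcases hsub hx with ha | hb
  exacts [not_mem a hac hua.le ha, not_mem b hbc hub hb]
end

section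
/- Let r > 0 and let S be a set of points of the Euclidean plane (the centers of equal disks of radius r) such that: (i) S is locally finite, i.e., every bounded subset of the plane contains only finitely many points of S; and (ii) every point of the plane belongs to at least two of the closed disks of radius r centered at points of S. Then for every c ∈ S there exist a point p in the closed disk of radius r centered at c and three pairwise distinct centers s₁, s₂, s₃ ∈ S such that p lies in the closed disk of radius r centered at sᵢ for each i = 1, 2, 3. -/
/-!
Suppose no point of the disk `D` around `c` lies in three disks. Then every point of `D` lies in
exactly one disk around a center other than `c`, so these disks cut `D` into pairwise disjoint
closed pieces, only finitely many of which are nonempty. Since `D` is connected, it lies in a single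
disk around some `s₀ ≠ c`, which is impossible for two disks of the same radius.
-/

open Metric Set

theorem IsPreconnected.subset_of_pairwise_disjoint_closed_cover {ι X : Type*} [TopologicalSpace X]
    {K : Set X} (hK : IsPreconnected K) {F : ι → Set X} (hF : ∀ i, IsClosed (F i))
    (hlf : LocallyFinite F) (hcover : K ⊆ ⋃ i, F i)
    (hdisj : Pairwise fun i j => Disjoint (K ∩ F i) (F j)) {i₀ : ι} (hi₀ : (K ∩ F i₀).Nonempty) :
    K ⊆ F i₀ := by
  classical
  set G : ι → Set X := fun i => if i = i₀ then ∅ else F i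
  have hG : IsClosed (⋃ i, G i) :=
    (hlf.subset fun i => by dsimp only [G]; split_ifs <;> simp).isClosed_iUnion
      fun i => by dsimp only [G]; split_ifs; exacts [isClosed_empty, hF i]
  have hcover' : K ⊆ F i₀ ∪ ⋃ i, G i := by
    intro x hx
    obtain ⟨i, hi⟩ := mem_iUnion.1 (hcover hx)
    by_cases h : i = i₀
    · exact .inl (h ▸ hi)
    · exact .inr (mem_iUnion.2 ⟨i, by simpa [G, h] using hi⟩)
  have hKG : ¬ (K ∩ ⋃ i, G i).Nonempty := by
    intro hne
    obtain ⟨x, hxK, hx₀, hxG⟩ :=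
      isPreconnected_closed_iff.1 hK _ _ (hF i₀) hG hcover' hi₀ hne
    obtain ⟨i, hi⟩ := mem_iUnion.1 hxG
    by_cases h : i = i₀
    · simp [G, h] at hi
    · exact disjoint_left.1 (hdisj (Ne.symm h)) ⟨hxK, hx₀⟩ (by simpa [G, h] using hi)
  intro x hx
  exact (hcover' hx).resolve_right fun hxG => hKG ⟨x, hx, hxG⟩

theorem locallyFinite_closedBall_of_finite_inter_isBounded {X : Type*} [PseudoMetricSpace X]
    {S : Set X} (hS : ∀ B, Bornology.IsBounded B → (S ∩ B).Finite) (r : ℝ) :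
    LocallyFinite fun s : S => closedBall (s : X) r := by
  intro x
  refine ⟨ball x 1, ball_mem_nhds x one_pos, ?_⟩
  refine ((hS _ (isBounded_closedBall (x := x) (r := r + 1))).preimage
    Subtype.val_injective.injOn).subset ?_
  rintro s ⟨y, hys, hyx⟩
  refine ⟨s.2, ?_⟩
  calc dist (s : X) x ≤ dist (s : X) y + dist y x := dist_triangle _ _ _
    _ ≤ r + 1 := add_le_add (dist_comm (s : X) y ▸ hys) (le_of_lt hyx)

theorem eq_of_closedBall_subset_closedBall {E : Type*} [NormedAddCommGroup E] [NormedSpace ℝ E]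
    {c s : E} {r : ℝ} (hr : 0 ≤ r) (h : closedBall c r ⊆ closedBall s r) : c = s := by
  by_contra hne
  have hd : 0 < dist s c := dist_pos.2 (Ne.symm hne)
  -- the point of the disk around `c` farthest from `s`
  set p := AffineMap.lineMap s c (1 + r / dist s c)
  have hpc : dist p c = r := by
    rw [dist_lineMap_right, sub_add_cancel_left, norm_neg, Real.norm_eq_abs,
      abs_of_nonneg (by positivity), div_mul_cancel₀ _ hd.ne']
  have hps : dist p s = dist s c + r := by
    rw [dist_lineMap_left, Real.norm_eq_abs, abs_of_nonneg (by positivity), add_mul,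
      div_mul_cancel₀ _ hd.ne', one_mul]
  have := mem_closedBall.1 (h (mem_closedBall.2 hpc.le))
  linarith

/-- If `S` is a locally finite set of centers of equal disks of radius `r > 0`
forming a two-fold covering of the plane, then for every `c ∈ S` there are a
point `p` of the disk around `c` and three pairwise distinct centers
`s₁, s₂, s₃ ∈ S` whose disks all contain `p`. -/
theorem exists_point_in_three_disks
    (r : ℝ) (hr : 0 < r)
    (S : Set (EuclideanSpace ℝ (Fin 2)))
    (hfin : ∀ B : Set (EuclideanSpace ℝ (Fin 2)),
      Bornology.IsBounded B → (S ∩ B).Finite)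
    (hcover : ∀ p : EuclideanSpace ℝ (Fin 2),
      ∃ s₁ ∈ S, ∃ s₂ ∈ S, s₁ ≠ s₂ ∧
        p ∈ Metric.closedBall s₁ r ∧ p ∈ Metric.closedBall s₂ r) :
    ∀ c ∈ S, ∃ p ∈ Metric.closedBall c r,
      ∃ s₁ ∈ S, ∃ s₂ ∈ S, ∃ s₃ ∈ S,
        s₁ ≠ s₂ ∧ s₁ ≠ s₃ ∧ s₂ ≠ s₃ ∧
        p ∈ Metric.closedBall s₁ r ∧ p ∈ Metric.closedBall s₂ r ∧
        p ∈ Metric.closedBall s₃ r := by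
  intro c hc
  by_contra! hthree
  have hcover_other : closedBall c r ⊆ ⋃ s : ↥(S \ {c}), closedBall (s : _) r := by
    intro p _
    obtain ⟨s₁, hs₁, s₂, hs₂, hne, hp₁, hp₂⟩ := hcover p
    by_cases h : s₁ = c
    · exact mem_iUnion.2 ⟨⟨s₂, hs₂, h ▸ hne.symm⟩, hp₂⟩
    · exact mem_iUnion.2 ⟨⟨s₁, hs₁, h⟩, hp₁⟩
  have hdisj : Pairwise fun s t : ↥(S \ {c}) =>
      Disjoint (closedBall c r ∩ closedBall (s : _) r) (closedBall (t : _) r) := by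
    rintro s t hst
    refine disjoint_left.2 fun p ⟨hpc, hps⟩ hpt => ?_
    exact hthree p hpc c hc s s.2.1 t t.2.1 (Ne.symm s.2.2) (Ne.symm t.2.2)
      (Subtype.coe_injective.ne hst) hpc hps hpt
  obtain ⟨s₀, hcs₀⟩ := mem_iUnion.1 (hcover_other (mem_closedBall_self hr.le))
  have hsub := (convex_closedBall c r).isPreconnected.subset_of_pairwise_disjoint_closed_cover
    (fun _ => isClosed_closedBall)
    (locallyFinite_closedBall_of_finite_inter_isBounded
      (fun B hB => (hfin B hB).subset (inter_subset_inter_left _ sdiff_subset)) r)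
    hcover_other hdisj ⟨c, mem_closedBall_self hr.le, hcs₀⟩
  exact s₀.2.2 (eq_of_closedBall_subset_closedBall hr.le hsub).symm
end
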